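/- arXiv:2002.02355 — 2 statements merged into one kernel-verified Lean document; each statement's English description precedes it below -/
import Mathlib

section
/- Let K be a differential field of characteristic zero and t a primitive generator over K. For each f ∈ K(t), there exists a unique t-simple element h ∈ K(t) such that f − h ∈ K(t)′ + K[t]. -/
open Polynomial Differential IntermediateField
open scoped Differential

/-!
Existence is Hermite reduction. Write `f = p / d`. If `d = u v^(n+2)` with `v` monic irreducible
and `v ∤ u`, then `v` is coprime to `(n+1) u v′`: `v′` has smaller degree than `v`, and it is
nonzero because only constants have derivative zero. A Bézout identity then gives `c` and `b` with
`p / d - b / (u v^(n+1)) = (c / v^(n+1))′`, which lowers the degree of the denominator until it is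
squarefree; division with remainder then splits off a polynomial.

For uniqueness, the difference of two `t`-simple elements is `t`-simple, so it suffices that a
`t`-simple `h = w′ + r` vanishes. If `w = x / y` in lowest terms and `v^(n+1)` exactly divides `y`,
then `w′` has a pole of order exactly `n + 2` at `v`, which no squarefree denominator absorbs. So
`w` is a polynomial, hence so is `h`, and being proper it is `0`.
-/

def Derivation.ofLeibniz {A : Type*} [CommRing A] (δ : A → A)
    (hadd : ∀ a b, δ (a + b) = δ a + δ b) (hmul : ∀ a b, δ (a * b) = δ a * b + a * δ b) :
    Derivation ℤ A A :=
  Derivation.mk' (AddMonoidHom.mk' δ hadd).toIntLinearMap fun a b => by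
    simp only [AddMonoidHom.coe_toIntLinearMap, AddMonoidHom.mk'_apply, smul_eq_mul, hmul]
    ring

section PolynomialDerivation

variable {K : Type*} [Field K]

theorem Polynomial.Monic.degree_implicitDeriv_C_lt [Differential K] {p : K[X]} (hp : p.Monic)
    (a : K) : (implicitDeriv (C a) p).degree < p.degree := by
  have hcoeffs : (mapCoeffs p).degree < p.degree := by
    rw [degree_eq_natDegree hp.ne_zero, degree_lt_iff_coeff_zero]
    intro m hm
    rw [coeff_mapCoeffs]
    rcases (show p.natDegree ≤ m by exact_mod_cast hm).eq_or_lt with h | h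
    · rw [← h, hp.coeff_natDegree, Derivation.map_one_eq_zero]
    · rw [coeff_eq_zero_of_natDegree_lt h, map_zero]
  have hderiv : (C a * derivative p).degree < p.degree := by
    rw [← smul_eq_C_mul]
    exact (degree_smul_le _ _).trans_lt (degree_derivative_lt hp.ne_zero)
  simpa [implicitDeriv] using (degree_add_le _ _).trans_lt (max_lt hcoeffs hderiv)

theorem Irreducible.not_dvd_natCast_add_one [CharZero K] {v : K[X]} (hv : Irreducible v) (n : ℕ) :
    ¬v ∣ (n + 1 : K[X]) := fun h =>
  hv.not_isUnit <| isUnit_of_dvd_unit h <| by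
    simpa using (isUnit_C (R := K)).mpr (Nat.cast_add_one_ne_zero n).isUnit

theorem exists_monic_irreducible_mul_self_dvd {d : K[X]} (hd : d ≠ 0) (hsf : ¬Squarefree d) :
    ∃ v : K[X], v.Monic ∧ Irreducible v ∧ v * v ∣ d := by
  obtain ⟨x, hx, hxd⟩ : ∃ x, Irreducible x ∧ x * x ∣ d := by
    simpa [squarefree_iff_irreducible_sq_not_dvd_of_ne_zero hd] using hsf
  obtain ⟨v, hvm, hvirr, hvx⟩ := exists_monic_irreducible_factor x hx.not_isUnit
  exact ⟨v, hvm, hvirr, (mul_dvd_mul hvx hvx).trans hxd⟩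

theorem exists_eq_mul_sub_add_mul {R : Type*} [CommRing R] (d : R → R) {m u v : R}
    (h : IsCoprime v (m * u * d v)) (a : R) :
    ∃ c b, a = u * (d c * v - m * c * d v) + b * v := by
  obtain ⟨s, c', hsc⟩ := h
  exact ⟨-(c' * a), a * s - u * d (-(c' * a)), by linear_combination (-a) * hsc⟩

/-- If `(x / y)′` has at most simple poles, then `x / y` has no poles. -/
theorem isUnit_of_sq_dvd_mul_squarefree [CharZero K] (d : Derivation ℤ K[X] K[X])
    (hd : ∀ v : K[X], v.Monic → Irreducible v → ¬v ∣ d v)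
    {x y b : K[X]} (hxy : IsCoprime x y) (hy : y ≠ 0) (hb : Squarefree b)
    (hdvd : y ^ 2 ∣ (d x * y - x * d y) * b) : IsUnit y := by
  by_contra hyu
  obtain ⟨v, hvm, hvirr, hvy⟩ := exists_monic_irreducible_factor y hyu
  obtain ⟨z, hyz, hvz⟩ :=
    (FiniteMultiplicity.of_not_isUnit hvirr.not_isUnit hy).exists_eq_pow_mul_and_not_dvd
  obtain ⟨n, hn⟩ := Nat.exists_eq_add_one.mpr (multiplicity_pos_of_dvd hvy)
  rw [hn] at hyz
  set M := v * (d x * z - x * d z) - (n + 1 : K[X]) * x * d v * z with hM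
  have hnum : d x * y - x * d y = v ^ n * M := by
    rw [hyz, hM]
    simp only [Derivation.leibniz, Derivation.leibniz_pow, smul_eq_mul, nsmul_eq_mul]
    push_cast
    ring
  have hvM : v ∣ M := by
    have hsq : v ^ n * v ^ 2 ∣ v ^ n * (M * b) := by
      rw [← mul_assoc, ← hnum]
      exact (Dvd.intro (v ^ n * z ^ 2) (by rw [hyz]; ring)).trans hdvd
    have h2 := (mul_dvd_mul_iff_left (pow_ne_zero n hvirr.ne_zero)).mp hsq
    by_contra hvM
    have hcop : IsCoprime (v ^ 2) M := ((hvirr.coprime_iff_not_dvd).mpr hvM).pow_left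
    exact hvirr.not_isUnit (hb v (by rw [← sq]; exact hcop.dvd_of_dvd_mul_left h2))
  have hv : v ∣ (n + 1 : K[X]) * x * d v * z := by
    have : (n + 1 : K[X]) * x * d v * z = v * (d x * z - x * d z) - M := by rw [hM]; ring
    exact this ▸ dvd_sub (dvd_mul_right v _) hvM
  have hvx : ¬v ∣ x := fun h => hvirr.not_isUnit (hxy.isUnit_of_dvd' h hvy)
  rcases hvirr.prime.dvd_or_dvd hv with hv | hv
  · rcases hvirr.prime.dvd_or_dvd hv with hv | hv
    · rcases hvirr.prime.dvd_or_dvd hv with hv | hv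
      · exact hvirr.not_dvd_natCast_add_one n hv
      · exact hvx hv
    · exact hd v hvm hvirr hv
  · exact hvz hv

end PolynomialDerivation

section Fractions

variable {K F : Type*} [Field K] [Field F] [Algebra K F] {t : F}

theorem Transcendental.aeval_ne_zero (htr : Transcendental K t) {p : K[X]} (hp : p ≠ 0) :
    Polynomial.aeval t p ≠ 0 := fun h =>
  hp (transcendental_iff_injective.mp htr (h.trans (map_zero _).symm))

theorem exists_isCoprime_eq_aeval_div (htr : Transcendental K t) (hgen : K⟮t⟯ = ⊤) (x : F) :
    ∃ p q : K[X], q ≠ 0 ∧ IsCoprime p q ∧ x = aeval t p / aeval t q := by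
  classical
  obtain ⟨r, s, rfl⟩ := (mem_adjoin_simple_iff K x).mp (hgen ▸ mem_top)
  by_cases hs : s = 0
  · exact ⟨0, 1, one_ne_zero, isCoprime_zero_left.mpr isUnit_one, by simp [hs]⟩
  obtain ⟨r', s', hr, hs', hu⟩ := extract_gcd r s
  set g := gcd r s
  have hg : g ≠ 0 := fun h => hs (by rw [hs', h, zero_mul])
  refine ⟨r', s', fun h => hs (by rw [hs', h, mul_zero]), (gcd_isUnit_iff r' s').mp hu, ?_⟩
  rw [hr, hs', map_mul, map_mul, mul_div_mul_left _ _ (htr.aeval_ne_zero hg)]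

variable (K t) in
def IsTSimple (h : F) : Prop :=
  ∃ p q : K[X], q ≠ 0 ∧ p.degree < q.degree ∧ Squarefree q ∧ h = aeval t p / aeval t q

theorem IsTSimple.sub (htr : Transcendental K t) {h₁ h₂ : F} (hh₁ : IsTSimple K t h₁)
    (hh₂ : IsTSimple K t h₂) : IsTSimple K t (h₁ - h₂) := by
  classical
  obtain ⟨p₁, q₁, hq₁, hdeg₁, hsf₁, rfl⟩ := hh₁
  obtain ⟨p₂, q₂, hq₂, hdeg₂, hsf₂, rfl⟩ := hh₂
  obtain ⟨r₁, r₂, hr₁, hr₂, hu⟩ := extract_gcd q₁ q₂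
  set g := gcd q₁ q₂
  have hg : g ≠ 0 := fun h => hq₁ (by rw [hr₁, h, zero_mul])
  have hr₁0 : r₁ ≠ 0 := fun h => hq₁ (by rw [hr₁, h, mul_zero])
  have hr₂0 : r₂ ≠ 0 := fun h => hq₂ (by rw [hr₂, h, mul_zero])
  have hsf : Squarefree (q₁ * r₂) := by
    rw [hr₂] at hsf₂
    refine squarefree_mul_iff.mpr ⟨?_, hsf₁, hsf₂.of_mul_right⟩
    rw [hr₁]
    exact (IsRelPrime.of_squarefree_mul hsf₂).mul_left (gcd_isUnit_iff_isRelPrime.mp hu)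
  have hdeg : (p₁ * r₂ - p₂ * r₁).degree < (q₁ * r₂).degree := by
    refine (degree_sub_le _ _).trans_lt (max_lt ?_ ?_)
    · rw [degree_mul, degree_mul]
      exact WithBot.add_lt_add_right (degree_ne_bot.mpr hr₂0) hdeg₁
    · rw [show q₁ * r₂ = q₂ * r₁ by rw [hr₁, hr₂]; ring, degree_mul, degree_mul]
      exact WithBot.add_lt_add_right (degree_ne_bot.mpr hr₁0) hdeg₂
  refine ⟨_, _, mul_ne_zero hq₁ hr₂0, hdeg, hsf, ?_⟩
  have := htr.aeval_ne_zero hg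
  have := htr.aeval_ne_zero hr₁0
  have := htr.aeval_ne_zero hr₂0
  rw [hr₁, hr₂]
  simp only [map_mul, map_sub]
  field_simp

end Fractions

section PrimitiveExtension

variable {K F : Type*} [Field K] [Field F] [Algebra K F] [Differential F] {t : F} {a : K}

variable (K t) in
noncomputable def derivAddPolynomial : AddSubgroup F :=
  (Differential.deriv : Derivation ℤ F F).toLinearMap.range.toAddSubgroup ⊔
    (aeval t : K[X] →ₐ[K] F).toRingHom.toAddMonoidHom.range

theorem mem_derivAddPolynomial {x : F} :
    x ∈ derivAddPolynomial K t ↔ ∃ (w : F) (r : K[X]), x = w′ + aeval t r := by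
  simp [derivAddPolynomial, AddSubgroup.mem_sup, eq_comm]

theorem aeval_mem_derivAddPolynomial (r : K[X]) : aeval t r ∈ derivAddPolynomial K t :=
  mem_derivAddPolynomial.mpr ⟨0, r, by simp⟩

theorem deriv_mem_derivAddPolynomial (w : F) : w′ ∈ derivAddPolynomial K t :=
  mem_derivAddPolynomial.mpr ⟨w, 0, by simp⟩

variable [Differential K] [DifferentialAlgebra K F]

theorem deriv_aeval_eq_aeval_implicitDeriv (ht : t′ = algebraMap K F a) (p : K[X]) :
    (aeval t p)′ = aeval t (implicitDeriv (C a) p) :=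
  deriv_aeval_eq_implicitDeriv t (C a) (by rw [ht, aeval_C]) p

theorem deriv_aeval_div (ht : t′ = algebraMap K F a) (p q : K[X]) :
    (aeval t p / aeval t q)′
      = aeval t (implicitDeriv (C a) p * q - p * implicitDeriv (C a) q) / aeval t q ^ 2 := by
  rw [Derivation.leibniz_div, smul_eq_mul, smul_eq_mul, smul_eq_mul,
    deriv_aeval_eq_aeval_implicitDeriv ht, deriv_aeval_eq_aeval_implicitDeriv ht]
  simp only [map_sub, map_mul, inv_pow]
  ring

variable [ContainConstants K F]

theorem exists_eq_C_of_implicitDeriv_eq_zero (htr : Transcendental K t)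
    (ht : t′ = algebraMap K F a) {p : K[X]} (hp : implicitDeriv (C a) p = 0) : ∃ c, p = C c := by
  have hconst : (aeval t p)′ = 0 := by rw [deriv_aeval_eq_aeval_implicitDeriv ht, hp, map_zero]
  obtain ⟨c, hc⟩ := mem_range_of_deriv_eq_zero K hconst
  refine ⟨c, transcendental_iff_injective.mp htr ?_⟩
  rw [aeval_C, hc]

theorem not_dvd_implicitDeriv_C (htr : Transcendental K t)
    (ht : t′ = algebraMap K F a) {v : K[X]} (hv : v.Monic) (hirr : Irreducible v) :
    ¬v ∣ implicitDeriv (C a) v := fun hdvd => by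
  obtain ⟨c, rfl⟩ := exists_eq_C_of_implicitDeriv_eq_zero htr ht
    (eq_zero_of_dvd_of_degree_lt hdvd (hv.degree_implicitDeriv_C_lt a))
  simpa using hirr.natDegree_pos

variable [CharZero K]

theorem exists_div_sub_div_mem_derivAddPolynomial (htr : Transcendental K t)
    (ht : t′ = algebraMap K F a) {u v : K[X]} (hv : v.Monic) (hirr : Irreducible v) (hvu : ¬v ∣ u)
    (n : ℕ) (p : K[X]) : ∃ b : K[X], aeval t p / aeval t (u * v ^ (n + 2))
      - aeval t b / aeval t (u * v ^ (n + 1)) ∈ derivAddPolynomial K t := by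
  set D := implicitDeriv (C a)
  have hcop : IsCoprime v ((n + 1 : K[X]) * u * D v) := by
    refine hirr.coprime_iff_not_dvd.mpr fun h => ?_
    rcases hirr.prime.dvd_or_dvd h with h | h
    · rcases hirr.prime.dvd_or_dvd h with h | h
      · exact hirr.not_dvd_natCast_add_one n h
      · exact hvu h
    · exact not_dvd_implicitDeriv_C htr ht hv hirr h
  obtain ⟨c, b, hcb⟩ := exists_eq_mul_sub_add_mul D hcop p
  refine ⟨b, ?_⟩
  convert deriv_mem_derivAddPolynomial (K := K) (t := t) (aeval t c / aeval t (v ^ (n + 1)))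
    using 1
  have hA := congrArg (aeval t) hcb
  have hu0 : u ≠ 0 := fun h => hvu (h ▸ dvd_zero v)
  have := htr.aeval_ne_zero hu0
  have := htr.aeval_ne_zero hirr.ne_zero
  rw [deriv_aeval_div ht, Derivation.leibniz_pow]
  simp only [map_mul, map_pow, map_sub, map_add, map_one, map_natCast, nsmul_eq_mul, smul_eq_mul,
    add_tsub_cancel_right, Nat.cast_add, Nat.cast_one] at hA ⊢
  field_simp
  linear_combination aeval t v ^ (2 * n + 2) * hA

theorem exists_isTSimple_div_sub_mem (htr : Transcendental K t) (ht : t′ = algebraMap K F a)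
    (p : K[X]) {d : K[X]} (hd : d ≠ 0) :
    ∃ h, IsTSimple K t h ∧ aeval t p / aeval t d - h ∈ derivAddPolynomial K t := by
  induction hN : d.natDegree using Nat.strong_induction_on generalizing p d with
  | _ N ih =>
  by_cases hsf : Squarefree d
  · refine ⟨aeval t (p % d) / aeval t d, ⟨p % d, d, hd, degree_mod_lt p hd, hsf, rfl⟩, ?_⟩
    convert aeval_mem_derivAddPolynomial (K := K) (t := t) (p / d) using 1
    rw [← sub_div, ← map_sub, div_eq_iff (htr.aeval_ne_zero hd), ← map_mul]
    congr 1
    linear_combination (EuclideanDomain.mod_add_div p d).symm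
  obtain ⟨v, hvm, hvirr, hvd⟩ := exists_monic_irreducible_mul_self_dvd hd hsf
  have hfin := FiniteMultiplicity.of_not_isUnit hvirr.not_isUnit hd
  obtain ⟨u, hdu, hvu⟩ := hfin.exists_eq_pow_mul_and_not_dvd
  obtain ⟨n, hn⟩ := Nat.exists_eq_add_of_le' (hfin.pow_dvd_iff_le_multiplicity.mp (sq v ▸ hvd))
  rw [hn, mul_comm] at hdu
  obtain ⟨b, hb⟩ := exists_div_sub_div_mem_derivAddPolynomial htr ht hvm hvirr hvu n p
  have hu0 : u ≠ 0 := fun h => hvu (h ▸ dvd_zero v)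
  have hlt : (u * v ^ (n + 1)).natDegree < N := by
    rw [← hN, hdu, natDegree_mul hu0 (pow_ne_zero _ hvirr.ne_zero),
      natDegree_mul hu0 (pow_ne_zero _ hvirr.ne_zero), natDegree_pow, natDegree_pow]
    have := hvirr.natDegree_pos
    nlinarith
  obtain ⟨h, hh, hmem⟩ := ih _ hlt b (mul_ne_zero hu0 (pow_ne_zero _ hvirr.ne_zero)) rfl
  exact ⟨h, hh, by simpa [hdu] using add_mem hb hmem⟩

theorem exists_eq_aeval_of_deriv_mul_eq_aeval (htr : Transcendental K t)
    (ht : t′ = algebraMap K F a) (hgen : K⟮t⟯ = ⊤) {w : F} {b s : K[X]} (hb : Squarefree b)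
    (h : w′ * aeval t b = aeval t s) : ∃ r : K[X], w = aeval t r := by
  obtain ⟨x, y, hy, hxy, rfl⟩ := exists_isCoprime_eq_aeval_div htr hgen w
  have hy' := htr.aeval_ne_zero hy
  rw [deriv_aeval_div ht, div_mul_eq_mul_div, div_eq_iff (pow_ne_zero 2 hy'), ← map_pow,
    ← map_mul, ← map_mul] at h
  have hdvd : y ^ 2 ∣ (implicitDeriv (C a) x * y - x * implicitDeriv (C a) y) * b :=
    ⟨s, by rw [transcendental_iff_injective.mp htr h, mul_comm]⟩
  obtain ⟨y', hyy'⟩ := (isUnit_of_sq_dvd_mul_squarefree _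
    (fun v hv hirr => not_dvd_implicitDeriv_C htr ht hv hirr) hxy hy hb hdvd).exists_right_inv
  refine ⟨x * y', ?_⟩
  rw [div_eq_iff hy', map_mul, mul_assoc, ← map_mul, mul_comm y', hyy', map_one, mul_one]

theorem IsTSimple.eq_zero_of_mem (htr : Transcendental K t) (ht : t′ = algebraMap K F a)
    (hgen : K⟮t⟯ = ⊤) {h : F} (hh : IsTSimple K t h) (hmem : h ∈ derivAddPolynomial K t) :
    h = 0 := by
  obtain ⟨p, q, hq, hdeg, hsf, rfl⟩ := hh
  obtain ⟨w, r, hw⟩ := mem_derivAddPolynomial.mp hmem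
  have hq' := htr.aeval_ne_zero hq
  obtain ⟨x, rfl⟩ := exists_eq_aeval_of_deriv_mul_eq_aeval htr ht hgen hsf
    (w := w) (s := p - r * q) (by rw [map_sub, map_mul, ← sub_eq_of_eq_add hw]; field_simp)
  rw [deriv_aeval_eq_aeval_implicitDeriv ht, ← map_add, div_eq_iff hq', ← map_mul] at hw
  have hdvd : q ∣ p := Dvd.intro_left _ (transcendental_iff_injective.mp htr hw).symm
  rw [eq_zero_of_dvd_of_degree_lt hdvd hdeg, map_zero, zero_div]

theorem existsUnique_isTSimple_sub_mem (htr : Transcendental K t) (ht : t′ = algebraMap K F a)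
    (hgen : K⟮t⟯ = ⊤) (f : F) :
    ∃! h, IsTSimple K t h ∧ f - h ∈ derivAddPolynomial K t := by
  obtain ⟨p, q, hq, -, rfl⟩ := exists_isCoprime_eq_aeval_div htr hgen f
  obtain ⟨h, hh, hmem⟩ := exists_isTSimple_div_sub_mem htr ht p hq
  refine ⟨h, ⟨hh, hmem⟩, fun h' ⟨hh', hmem'⟩ => sub_eq_zero.mp ?_⟩
  refine (hh'.sub htr hh).eq_zero_of_mem htr ht hgen ?_
  simpa using sub_mem hmem hmem'

end PrimitiveExtension

theorem IntermediateField.adjoin_simple_eq_top_of_closure_union_eq_top {F : Type*} [Field F]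
    {K : Subfield F} {t : F} (hgen : Subfield.closure ((K : Set F) ∪ {t}) = ⊤) : K⟮t⟯ = ⊤ := by
  refine toSubfield_injective ?_
  rw [adjoin_toSubfield, top_toSubfield, ← hgen]
  exact congrArg (fun s => Subfield.closure (s ∪ {t})) Subtype.range_coe

/-- Let `K` be a differential field of characteristic zero and `t` a primitive
generator over `K`, with `F = K(t)`.  For each `f ∈ K(t)` there exists a unique
`t`-simple element `h ∈ K(t)` (the Hermitian part of `f`) such that
`f − h ∈ K(t)′ + K[t]`. -/
theorem hermitian_part_exists_unique (F : Type*) [Field F] [CharZero F]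
    (δ : F → F)
    (hδadd : ∀ a b : F, δ (a + b) = δ a + δ b)
    (hδmul : ∀ a b : F, δ (a * b) = δ a * b + a * δ b)
    (K : Subfield F) (hK : ∀ a ∈ K, δ a ∈ K)
    (t : F) (htr : Transcendental ↥K t) (ht : δ t ∈ K)
    (hgen : Subfield.closure ((K : Set F) ∪ {t}) = ⊤)
    (hnewconst : ∀ c : F, δ c = 0 → c ∈ K)
    (f : F) :
    ∃! h : F,
      (∃ p q : Polynomial ↥K, q ≠ 0 ∧ p.degree < q.degree ∧ Squarefree q ∧
        h = Polynomial.aeval t p / Polynomial.aeval t q) ∧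
      (∃ (w : F) (r : Polynomial ↥K), f - h = δ w + Polynomial.aeval t r) := by
  let _ : Differential F := ⟨.ofLeibniz δ hδadd hδmul⟩
  let _ : Differential K := ⟨.ofLeibniz (fun a => ⟨δ a, hK a a.2⟩)
    (fun a b => Subtype.ext (hδadd a b)) (fun a b => Subtype.ext (hδmul a b))⟩
  have _ : DifferentialAlgebra K F := ⟨fun _ => rfl⟩
  have _ : ContainConstants K F := ⟨fun {c} hc => ⟨⟨c, hnewconst c hc⟩, rfl⟩⟩
  obtain ⟨h, ⟨hh, hmem⟩, huniq⟩ := existsUnique_isTSimple_sub_mem htr (a := ⟨δ t, ht⟩) rfl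
    (IntermediateField.adjoin_simple_eq_top_of_closure_union_eq_top hgen) f
  exact ⟨h, ⟨hh, mem_derivAddPolynomial.mp hmem⟩,
    fun h' ⟨hh', hmem'⟩ => huniq h' ⟨hh', mem_derivAddPolynomial.mpr hmem'⟩⟩
end

section
/- Let K be a differential field of characteristic zero and t a primitive generator over K. If f ∈ K(t) is t-proper, then f − hp_t(f) ∈ K(t)′, where hp_t(f) is the Hermitian part of f, i.e., the unique t-simple element of K(t) congruent to f modulo K(t)′ + K[t]. -/
/-!
Because `t′ ∈ K`, the derivation `p ↦ p′` of `K[t]` does not raise degrees, so the derivative of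
a `t`-proper fraction is again `t`-proper. Writing `w = c + u` with `c ∈ K[t]` and `u` proper
(division with remainder), `f - h - u′` is proper and lies in `K[t]`, hence vanishes.
-/

open Polynomial IntermediateField Differential

section Derivations

variable {A : Type*} [CommRing A]

def leibnizDerivation (δ : A → A) (hadd : ∀ a b, δ (a + b) = δ a + δ b)
    (hmul : ∀ a b, δ (a * b) = δ a * b + a * δ b) : Derivation ℤ A A :=
  Derivation.mk' (AddMonoidHom.mk' δ hadd).toIntLinearMap fun a b => by
    simp [hmul, mul_comm, add_comm]

def Derivation.restrict {S : Type*} [SetLike S A] [SubringClass S A] (D : Derivation ℤ A A)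
    (s : S) (hs : ∀ a ∈ s, D a ∈ s) : Derivation ℤ s s :=
  Derivation.mk'
    { toFun a := ⟨D a, hs a a.2⟩
      map_add' a b := Subtype.ext (D.map_add a b)
      map_smul' n a := Subtype.ext (D.map_smul n a) }
    fun a b => Subtype.ext (D.leibniz a b)

end Derivations

namespace Differential

variable {A : Type*} [CommRing A] [Differential A]

theorem degree_mapCoeffs_le (p : A[X]) : (mapCoeffs p).degree ≤ p.degree :=
  degree_le_iff_coeff_zero _ _ |>.mpr fun m hm => by
    rw [coeff_mapCoeffs, coeff_eq_zero_of_degree_lt hm, map_zero]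

theorem degree_implicitDeriv_C_le (a : A) (p : A[X]) :
    (implicitDeriv (C a) p).degree ≤ p.degree := by
  simp only [implicitDeriv, Derivation.add_apply, Derivation.smul_apply, smul_eq_mul]
  refine (degree_add_le _ _).trans (max_le (degree_mapCoeffs_le p) ?_)
  exact (degree_mul_le _ _).trans ((add_le_add degree_C_le degree_derivative_le).trans (by simp))

end Differential

theorem Transcendental.aeval_ne_zero_s9 {R A : Type*} [CommRing R] [CommRing A] [Algebra R A]
    {x : A} (hx : Transcendental R x) {p : R[X]} (hp : p ≠ 0) : Polynomial.aeval x p ≠ 0 :=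
  fun h => hp (transcendental_iff.mp hx p h)

def IsProperFraction (K : Type*) {F : Type*} [CommRing K] [Field F] [Algebra K F] (t x : F) :
    Prop :=
  ∃ p q : K[X], q ≠ 0 ∧ p.degree < q.degree ∧ x = aeval t p / aeval t q

namespace IsProperFraction

variable {K F : Type*} [Field K] [Field F] [Algebra K F] {t : F}

theorem neg {x : F} (hx : IsProperFraction K t x) : IsProperFraction K t (-x) := by
  obtain ⟨p, q, hq, hpq, rfl⟩ := hx
  exact ⟨-p, q, hq, by rwa [degree_neg], by rw [map_neg, neg_div]⟩

theorem add (ht : Transcendental K t) {x y : F} (hx : IsProperFraction K t x)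
    (hy : IsProperFraction K t y) : IsProperFraction K t (x + y) := by
  obtain ⟨p₁, q₁, hq₁, hpq₁, rfl⟩ := hx
  obtain ⟨p₂, q₂, hq₂, hpq₂, rfl⟩ := hy
  refine ⟨p₁ * q₂ + q₁ * p₂, q₁ * q₂, mul_ne_zero hq₁ hq₂, ?_, ?_⟩
  · refine (degree_add_le _ _).trans_lt (max_lt ?_ ?_) <;> rw [degree_mul, degree_mul]
    · exact WithBot.add_lt_add_right (degree_ne_bot.mpr hq₂) hpq₁
    · exact WithBot.add_lt_add_left (degree_ne_bot.mpr hq₁) hpq₂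
  · rw [div_add_div _ _ (ht.aeval_ne_zero_s9 hq₁) (ht.aeval_ne_zero_s9 hq₂)]
    simp only [map_add, map_mul]

theorem sub (ht : Transcendental K t) {x y : F} (hx : IsProperFraction K t x)
    (hy : IsProperFraction K t y) : IsProperFraction K t (x - y) :=
  sub_eq_add_neg x y ▸ hx.add ht hy.neg

theorem eq_zero_of_eq_aeval (ht : Transcendental K t) {x : F} (hx : IsProperFraction K t x)
    {s : K[X]} (hs : x = aeval t s) : x = 0 := by
  obtain ⟨p, q, hq, hpq, rfl⟩ := hx
  have hp : p = s * q := transcendental_iff_injective.mp ht <| by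
    rw [map_mul, ← hs, div_mul_cancel₀ _ (ht.aeval_ne_zero_s9 hq)]
  obtain rfl | hs0 := eq_or_ne s 0
  · rw [hs, map_zero]
  · refine absurd hpq (not_lt.mpr ?_)
    rw [hp, degree_mul]
    exact le_add_of_nonneg_left (zero_le_degree_iff.mpr hs0)

theorem exists_eq_aeval_add (ht : Transcendental K t) {w : F} (hw : w ∈ K⟮t⟯) :
    ∃ (c : K[X]) (u : F), IsProperFraction K t u ∧ w = aeval t c + u := by
  obtain ⟨a, b, rfl⟩ := (mem_adjoin_simple_iff K w).mp hw
  obtain rfl | hb := eq_or_ne b 0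
  · exact ⟨0, 0, ⟨0, 1, one_ne_zero, by simp, by simp⟩, by simp⟩
  refine ⟨a / b, aeval t (a % b) / aeval t b, ⟨a % b, b, hb, degree_mod_lt a hb, rfl⟩, ?_⟩
  conv_lhs => rw [← EuclideanDomain.div_add_mod a b]
  rw [map_add, map_mul, add_div, mul_div_cancel_left₀ _ (ht.aeval_ne_zero_s9 hb)]

variable [Differential K] [Differential F] [DifferentialAlgebra K F]

theorem deriv (ht : Transcendental K t) {a : K} (hta : t′ = algebraMap K F a) {x : F}
    (hx : IsProperFraction K t x) : IsProperFraction K t x′ := by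
  obtain ⟨p, q, hq, hpq, rfl⟩ := hx
  set D := implicitDeriv (C a)
  have hD : ∀ r : K[X], (aeval t r)′ = aeval t (D r) :=
    deriv_aeval_eq_implicitDeriv t (C a) (by rwa [aeval_C])
  refine ⟨D p * q - p * D q, q * q, mul_ne_zero hq hq, ?_, ?_⟩
  · have hq' := degree_ne_bot.mpr hq
    refine (degree_sub_le _ _).trans_lt (max_lt ?_ ?_) <;> rw [degree_mul, degree_mul]
    · exact WithBot.add_lt_add_right hq' ((degree_implicitDeriv_C_le a p).trans_lt hpq)
    · exact (add_le_add_right (degree_implicitDeriv_C_le a q) _).trans_lt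
        (WithBot.add_lt_add_right hq' hpq)
  · have hq' := ht.aeval_ne_zero_s9 hq
    rw [Derivation.leibniz_div, hD, hD]
    simp only [map_sub, map_mul, smul_eq_mul]
    field_simp

theorem exists_eq_deriv (ht : Transcendental K t) {a : K} (hta : t′ = algebraMap K F a) {x w : F}
    (hx : IsProperFraction K t x) (hw : w ∈ K⟮t⟯) {r : K[X]} (hxw : x = w′ + aeval t r) :
    ∃ u : F, x = u′ := by
  obtain ⟨c, u, hu, rfl⟩ := exists_eq_aeval_add ht hw
  refine ⟨u, eq_of_sub_eq_zero <| (hx.sub ht (hu.deriv ht hta)).eq_zero_of_eq_aeval ht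
    (s := implicitDeriv (C a) c + r) ?_⟩
  rw [hxw, map_add, deriv_aeval_eq_implicitDeriv t (C a) (by rwa [aeval_C]), map_add]
  ring

end IsProperFraction

theorem proper_minus_hermitian_part_is_derivative_general (F : Type*) [Field F]
    (δ : F → F)
    (hδadd : ∀ a b : F, δ (a + b) = δ a + δ b)
    (hδmul : ∀ a b : F, δ (a * b) = δ a * b + a * δ b)
    (K : Subfield F) (hK : ∀ a ∈ K, δ a ∈ K)
    (t : F) (htr : Transcendental ↥K t) (ht : δ t ∈ K)
    (hgen : Subfield.closure ((K : Set F) ∪ {t}) = ⊤)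
    (f h : F)
    (hproper : ∃ p q : Polynomial ↥K, q ≠ 0 ∧ p.degree < q.degree ∧
      f = Polynomial.aeval t p / Polynomial.aeval t q)
    (hsimple : ∃ p q : Polynomial ↥K, q ≠ 0 ∧ p.degree < q.degree ∧ Squarefree q ∧
      h = Polynomial.aeval t p / Polynomial.aeval t q)
    (hcongr : ∃ (w : F) (r : Polynomial ↥K), f - h = δ w + Polynomial.aeval t r) :
    ∃ w : F, f - h = δ w := by
  let D := leibnizDerivation δ hδadd hδmul
  let _ : Differential F := ⟨D⟩
  let _ : Differential K := ⟨D.restrict K hK⟩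
  have : DifferentialAlgebra K F := ⟨fun _ => rfl⟩
  have hadjoin (w : F) : w ∈ K⟮t⟯ := by
    change w ∈ Subfield.closure (Set.range (algebraMap K F) ∪ {t})
    rw [show Set.range (algebraMap K F) = K from Subtype.range_coe, hgen]
    trivial
  obtain ⟨p, q, hq, hpq, -, rfl⟩ := hsimple
  obtain ⟨w, r, hwr⟩ := hcongr
  exact IsProperFraction.sub htr hproper ⟨p, q, hq, hpq, rfl⟩ |>.exists_eq_deriv htr
    (a := ⟨δ t, ht⟩) rfl (hadjoin w) hwr

/-- Let `K` be a differential field of characteristic zero and `t` a primitive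
generator over `K`, with `F = K(t)`.  If `f ∈ K(t)` is `t`-proper and `h` is
its Hermitian part (the unique `t`-simple element with
`f − h ∈ K(t)′ + K[t]`), then in fact `f − h ∈ K(t)′`. -/
theorem proper_minus_hermitian_part_is_derivative (F : Type*) [Field F] [CharZero F]
    (δ : F → F)
    (hδadd : ∀ a b : F, δ (a + b) = δ a + δ b)
    (hδmul : ∀ a b : F, δ (a * b) = δ a * b + a * δ b)
    (K : Subfield F) (hK : ∀ a ∈ K, δ a ∈ K)
    (t : F) (htr : Transcendental ↥K t) (ht : δ t ∈ K)
    (hgen : Subfield.closure ((K : Set F) ∪ {t}) = ⊤)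
    (hnewconst : ∀ c : F, δ c = 0 → c ∈ K)
    (f h : F)
    (hproper : ∃ p q : Polynomial ↥K, q ≠ 0 ∧ p.degree < q.degree ∧
      f = Polynomial.aeval t p / Polynomial.aeval t q)
    (hsimple : ∃ p q : Polynomial ↥K, q ≠ 0 ∧ p.degree < q.degree ∧ Squarefree q ∧
      h = Polynomial.aeval t p / Polynomial.aeval t q)
    (hcongr : ∃ (w : F) (r : Polynomial ↥K), f - h = δ w + Polynomial.aeval t r) :
    ∃ w : F, f - h = δ w :=
  proper_minus_hermitian_part_is_derivative_general F δ hδadd hδmul K hK t htr ht hgen f h hproper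
    hsimple hcongr
end
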